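/- For every n, the mutual agreement matrix MA^{2n} (all rows equal to (1,2,…,2n−1)) is realizable, and its realizations are in bijection with colored 1-factorizations of the complete graph K_{2n} (equivalently, Round-Robin tournament schedules on 2n players). -/

import Mathlib

/-- A Stable Roommates instance on `N` agents: each agent `a` has a strict
preference order over the other `N - 1` agents, given as an injective
enumeration `pref a : Fin (N - 1) → Fin N` avoiding `a` itself. -/
structure SRInstance (N : ℕ) where
  pref : Fin N → Fin (N - 1) → Fin N
  inj : ∀ a : Fin N, Function.Injective (pref a)
  ne_self : ∀ (a : Fin N) (i : Fin (N - 1)), pref a i ≠ a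

namespace SRInstance

/-- The (1-indexed) position of agent `b` in the preference order of agent `a`. -/
def posOf {N : ℕ} (I : SRInstance N) (a b : Fin N) : ℕ :=
  ∑ j ∈ Finset.univ.filter (fun j : Fin (N - 1) => I.pref a j = b), (j.1 + 1)

/-- The mutual attraction entry of agent `a` at index `i`: the position of `a`
in the preference order of the agent ranked `i`-th by `a`. -/
def MA {N : ℕ} (I : SRInstance N) (a : Fin N) (i : Fin (N - 1)) : ℕ :=
  I.posOf (I.pref a i) a

end SRInstance

/-- The mutual attraction distance between two SR instances on `N` agents:
the minimum over bijections of the agent sets of the summed ℓ1-distances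
between matched mutual attraction vectors. -/
noncomputable def distMAD {N : ℕ} (I I' : SRInstance N) : ℕ :=
  sInf { d | ∃ σ : Fin N ≃ Fin N,
    d = ∑ a : Fin N, ∑ i : Fin (N - 1), Nat.dist (I.MA a i) (I'.MA (σ a) i) }

/-- `I` realizes the mutual agreement matrix `MA^{2n}` (all rows equal to
`(1, 2, …, 2n-1)`): every pair of agents rank each other in the same
position. -/
def RealizesMAmat {n : ℕ} (I : SRInstance (2 * n)) : Prop :=
  ∀ a i, I.MA a i = i.1 + 1

/-- A Round-Robin tournament schedule on `2n` players (equivalently, a colored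
1-factorization of `K_{2n}`): `g j a` is the opponent of `a` on day (color)
`j`; each day's pairing is a perfect matching and each player meets each other
player exactly once. -/
def IsRoundRobin {n : ℕ} (g : Fin (2 * n - 1) → Fin (2 * n) → Fin (2 * n)) : Prop :=
  (∀ j, Function.Involutive (g j)) ∧ (∀ j a, g j a ≠ a) ∧
    (∀ a : Fin (2 * n), Function.Injective fun j => g j a)

/-!
Realizing `MA^{2n}` says exactly that whenever `a` ranks `b` in position `i`, `b` ranks `a` in
position `i` as well. Reading position `i` as day `i`, the preference lists of a realization are
then the rows of a Round-Robin schedule ("`a` meets `pref a i` on day `i`"), and conversely; the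
two structures carry the same data. Schedules exist by the circle method: on `ℤ/(2n-1) ∪ {∞}`,
day `c` pairs `∞` with `c` and `x` with its reflection `2c - x` in `c`.
-/

namespace SRInstance

variable {N : ℕ} (I : SRInstance N)

lemma posOf_pref (a : Fin N) (i : Fin (N - 1)) : I.posOf a (I.pref a i) = i.1 + 1 := by
  have : Finset.univ.filter (fun j => I.pref a j = I.pref a i) = {i} := by
    ext j
    simp [(I.inj a).eq_iff]
  simp [posOf, this]

lemma posOf_eq_succ_iff (a b : Fin N) (i : Fin (N - 1)) :
    I.posOf a b = i.1 + 1 ↔ I.pref a i = b := by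
  refine ⟨fun h => ?_, fun h => h ▸ I.posOf_pref a i⟩
  by_cases hb : ∃ j, I.pref a j = b
  · obtain ⟨j, rfl⟩ := hb
    rw [posOf_pref, add_left_inj, Fin.val_inj] at h
    rw [h]
  · have : Finset.univ.filter (fun j => I.pref a j = b) = ∅ := by
      simpa [Finset.filter_eq_empty_iff] using hb
    simp [posOf, this] at h

lemma MA_eq_succ_iff (a : Fin N) (i : Fin (N - 1)) :
    I.MA a i = i.1 + 1 ↔ I.pref (I.pref a i) i = a :=
  I.posOf_eq_succ_iff _ _ i

end SRInstance

lemma realizesMAmat_iff {n : ℕ} (I : SRInstance (2 * n)) :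
    RealizesMAmat I ↔ ∀ a i, I.pref (I.pref a i) i = a :=
  forall₂_congr fun a i => I.MA_eq_succ_iff a i

/-- A realization of `MA^{2n}` is its schedule "`a` plays `pref a j` on day `j`". -/
def realizesMAmatEquivRoundRobin (n : ℕ) :
    {I : SRInstance (2 * n) // RealizesMAmat I} ≃
      {g : Fin (2 * n - 1) → Fin (2 * n) → Fin (2 * n) // IsRoundRobin g} where
  toFun I := ⟨fun j a => I.1.pref a j,
    fun j a => (realizesMAmat_iff I.1).1 I.2 a j, fun j a => I.1.ne_self a j, I.1.inj⟩
  invFun g := ⟨⟨fun a j => g.1 j a, g.2.2.2, fun a j => g.2.2.1 j a⟩,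
    (realizesMAmat_iff _).2 fun a j => g.2.1 j a⟩
  left_inv _ := rfl
  right_inv _ := rfl

section CircleMethod

variable {R : Type*} [CommRing R] [DecidableEq R]

/-- Day `c` of the circle method on `R ∪ {∞}`, with `none` playing the role of `∞`. -/
def circleMatching (c : R) : Option R → Option R
  | none => some c
  | some x => if x = c then none else some (2 * c - x)

lemma circleMatching_involutive (c : R) : Function.Involutive (circleMatching c) := by
  rintro (_ | x)
  · simp [circleMatching]
  · by_cases hx : x = c
    · simp [circleMatching, hx]
    · have : 2 * c - x ≠ c := fun h => hx (by linear_combination -h)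
      simp [circleMatching, hx, this]

lemma circleMatching_ne_self (h2 : IsUnit (2 : R)) (c : R) (o : Option R) :
    circleMatching c o ≠ o := by
  rcases o with _ | x
  · simp [circleMatching]
  · by_cases hx : x = c
    · simp [circleMatching, hx]
    · simp only [circleMatching, hx, if_false, ne_eq, Option.some.injEq]
      intro h
      exact hx (h2.mul_left_cancel (by linear_combination -h))

lemma circleMatching_injective_day (h2 : IsUnit (2 : R)) (o : Option R) :
    Function.Injective fun c : R => circleMatching c o := by
  intro c c' h
  rcases o with _ | x
  · simpa [circleMatching] using h
  · by_cases hc : x = c <;> by_cases hc' : x = c'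
    · exact hc.symm.trans hc'
    · simp_all [circleMatching]
    · simp_all [circleMatching]
    · simp only [circleMatching, hc, hc', if_false, Option.some.injEq] at h
      exact h2.mul_left_cancel (by linear_combination h)

end CircleMethod

lemma exists_isRoundRobin (n : ℕ) :
    ∃ g : Fin (2 * n - 1) → Fin (2 * n) → Fin (2 * n), IsRoundRobin g := by
  rcases n with _ | k
  · exact ⟨fun j => j.elim0, fun j => j.elim0, fun j => j.elim0, fun a => a.elim0⟩
  have h2 : IsUnit (2 : ZMod (2 * k + 1)) := by
    simpa using (ZMod.isUnit_iff_coprime 2 (2 * k + 1)).2 (by simp)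
  let days : Fin (2 * (k + 1) - 1) ≃ ZMod (2 * k + 1) :=
    Fintype.equivOfCardEq (by simp; omega)
  let players : Option (ZMod (2 * k + 1)) ≃ Fin (2 * (k + 1)) :=
    Fintype.equivOfCardEq (by simp; omega)
  refine ⟨fun j a => players (circleMatching (days j) (players.symm a)), ?_, ?_, ?_⟩
  · intro j a
    simp [circleMatching_involutive _ _]
  · intro j a h
    exact circleMatching_ne_self h2 _ _ (players.symm_apply_eq.2 h.symm).symm
  · intro a j j' h
    exact days.injective (circleMatching_injective_day h2 _ (players.injective h))

/-- For every `n`, the mutual agreement matrix `MA^{2n}` is realizable, and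
its realizations are in bijection with the Round-Robin tournament schedules on
`2n` players (colored 1-factorizations of `K_{2n}`). -/
theorem MAmat_realizations_roundRobin (n : ℕ) :
    (∃ I : SRInstance (2 * n), RealizesMAmat I) ∧
    Nonempty ({I : SRInstance (2 * n) // RealizesMAmat I} ≃
      {g : Fin (2 * n - 1) → Fin (2 * n) → Fin (2 * n) // IsRoundRobin g}) := by
  obtain ⟨g, hg⟩ := exists_isRoundRobin n
  let e := realizesMAmatEquivRoundRobin n
  exact ⟨⟨_, (e.symm ⟨g, hg⟩).2⟩, ⟨e⟩⟩
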